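/- Let T be a Marco–Martens map on the probability space (X, ℬ, m) with Marco–Martens cover {X_j}_{j≥0}. Then there exists a σ-finite T-invariant measure μ on (X, ℬ) that is equivalent to m (i.e. μ and m are mutually absolutely continuous) and satisfies 0 < μ(X_j) < +∞ for every j ≥ 0. -/

import Mathlib

/-!
The invariant measure is an ultrafilter (Banach) limit of the normalized averages
`m_N(A) = ∑_{k<N} m(T⁻ᵏA) / ∑_{k<N} m(T⁻ᵏX₀)`. The denominators tend to infinity by (5), so
`m_N(T⁻¹A) - m_N(A) → 0`. Conditions (3) and (4) give `c_j m(A) ≤ m_N(A) ≤ C_j m(A)` for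
`A ⊆ X_j` and large `N`; hence on each piece `Y_j` the limit is a countably additive measure
equivalent to `m|Y_j`, and `μ` is the sum of these pieces. Globally the limit is only finitely
additive: condition (6) keeps the mass of `T⁻¹S` from escaping to the tail `Y_l, Y_{l+1}, …`,
and this makes `μ` invariant.
-/

open MeasureTheory Set Filter

/-- `MMY Xs j = Y_j := X_j \ ⋃_{i < j} X_i`. -/
def MMY {X : Type*} (Xs : ℕ → Set X) (j : ℕ) : Set X := Xs j \ ⋃ i ∈ Set.Iio j, Xs i

/-- `T` is a Marco–Martens map on the probability space `(X, ℬ, m)` with Marco–Martens cover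
`(X_j)_{j ≥ 0}` and constants `(K_j)_{j ≥ 0}` (condition (4)): `T` is measurable, maps
measurable sets to measurable sets, `m` is quasi-invariant under `T`, and conditions
(2)–(6) of the definition hold. -/
structure MarcoMartens {X : Type*} [MeasurableSpace X] (m : Measure X) (T : X → X)
    (Xs : ℕ → Set X) (K : ℕ → ℝ) : Prop where
  measurable_T : Measurable T
  image_meas : ∀ A : Set X, MeasurableSet A → MeasurableSet (T '' A)
  quasi_invariant : m.map T ≪ m
  meas_Xs : ∀ j, MeasurableSet (Xs j)
  cover : m (univ \ ⋃ n, Xs n) = 0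
  cond3 : ∀ i j : ℕ, ∃ k : ℕ, 0 < m (Xs i ∩ T^[k] ⁻¹' Xs j)
  one_le_K : ∀ j, 1 ≤ K j
  cond4 : ∀ j : ℕ, ∀ A B : Set X, MeasurableSet A → MeasurableSet B →
    A ⊆ Xs j → B ⊆ Xs j → ∀ n : ℕ,
    m (T^[n] ⁻¹' A) * m B ≤ ENNReal.ofReal (K j) * (m A * m (T^[n] ⁻¹' B))
  cond5 : ∑' n : ℕ, m (T^[n] ⁻¹' Xs 0) = ⊤
  cond6 : Tendsto (fun l : ℕ => m (T '' ⋃ j ∈ Set.Ici l, MMY Xs j)) atTop (nhds 0)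

/-- `mseq m T Xs A n = m_n(A) := (Σ_{k=0}^n m(T^{-k}A)) / (Σ_{k=0}^n m(T^{-k}X_0))`. -/
noncomputable def mseq {X : Type*} [MeasurableSpace X] (m : Measure X) (T : X → X)
    (Xs : ℕ → Set X) (A : Set X) (n : ℕ) : ℝ :=
  (∑ k ∈ Finset.range (n + 1), (m (T^[k] ⁻¹' A)).toReal) /
    (∑ k ∈ Finset.range (n + 1), (m (T^[k] ⁻¹' Xs 0)).toReal)

open Finset Function
open scoped ENNReal NNReal Topology

namespace ENNReal

lemma sum_range_shift_le (a : ℕ → ℝ≥0∞) (ha : ∀ k, a k ≤ 1) (N r : ℕ) :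
    ∑ k ∈ range N, a (k + r) ≤ ∑ k ∈ range N, a k + r := by
  have hr : ∑ k ∈ range r, a (N + k) ≤ r := by
    simpa using Finset.sum_le_card_nsmul (range r) _ 1 fun k _ => ha _
  calc ∑ k ∈ range N, a (k + r) ≤ ∑ k ∈ range r, a k + ∑ k ∈ range N, a (r + k) := by
        simp_rw [add_comm _ r]; exact le_add_self
    _ = ∑ k ∈ range N, a k + ∑ k ∈ range r, a (N + k) := by
        rw [← sum_range_add, ← sum_range_add, add_comm]
    _ ≤ ∑ k ∈ range N, a k + r := by gcongr

lemma le_sum_range_shift (a : ℕ → ℝ≥0∞) (ha : ∀ k, a k ≤ 1) (N r : ℕ) :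
    ∑ k ∈ range N, a k ≤ ∑ k ∈ range N, a (k + r) + r := by
  have hr : ∑ k ∈ range r, a k ≤ r := by
    simpa using Finset.sum_le_card_nsmul (range r) _ 1 fun k _ => ha k
  calc ∑ k ∈ range N, a k ≤ ∑ k ∈ range N, a k + ∑ k ∈ range r, a (N + k) := le_self_add
    _ = ∑ k ∈ range r, a k + ∑ k ∈ range N, a (k + r) := by
        simp_rw [add_comm _ r]; rw [← sum_range_add, ← sum_range_add, add_comm]
    _ ≤ ∑ k ∈ range N, a (k + r) + r := by rw [add_comm]; gcongr

end ENNReal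

namespace MeasureTheory

variable {X : Type*} [MeasurableSpace X]

lemma isSetRing_measurableSet : IsSetRing {s : Set X | MeasurableSet s} where
  empty_mem := .empty
  union_mem _ _ hs ht := MeasurableSet.union hs ht
  sdiff_mem _ _ hs ht := MeasurableSet.diff hs ht

namespace Measure

variable {ι : Type*} {μ : Measure X} {ν : ι → Measure X} {Y : ι → Set X}

theorem exists_tendsto_of_eventually_le (U : Ultrafilter ι) (ρ : Measure X) [IsFiniteMeasure ρ]
    (hνρ : ∀ᶠ i in (U : Filter ι), ν i ≤ ρ) :
    ∃ μ : Measure X, μ ≤ ρ ∧ ∀ s, MeasurableSet s → Tendsto (fun i => ν i s) U (𝓝 (μ s)) := by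
  set f : Set X → ℝ≥0∞ := fun s => (U.map fun i => ν i s).lim
  have hf : ∀ s, Tendsto (fun i => ν i s) U (𝓝 (f s)) := fun s => (U.map _).le_nhds_lim
  have hfρ : ∀ s, f s ≤ ρ s := fun s => le_of_tendsto (hf s) (hνρ.mono fun i h => h s)
  have hf_empty : f ∅ = 0 := tendsto_nhds_unique (hf ∅) (by simp)
  let F : AddContent ℝ≥0∞ {s | MeasurableSet s} :=
    isSetRing_measurableSet.addContent_of_union f hf_empty fun {s t} _ ht hst =>
      tendsto_nhds_unique (hf _) (by simpa [measure_union hst ht] using (hf s).add (hf t))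
  -- Domination by the finite measure `ρ` gives continuity at `∅`, hence σ-additivity.
  have hF : ∀ ⦃g : ℕ → Set X⦄, (∀ i, MeasurableSet (g i)) → Pairwise (Disjoint on g) →
      f (⋃ i, g i) = ∑' i, f (g i) := fun g hg hd =>
    addContent_iUnion_eq_sum_of_tendsto_zero isSetRing_measurableSet F
      (fun s _ => ne_top_of_le_ne_top (measure_ne_top ρ s) (hfρ s))
      (fun s hs hanti hempty => by
        have := tendsto_measure_iInter_atTop (μ := ρ) (fun n => (hs n).nullMeasurableSet) hanti
          ⟨0, measure_ne_top ρ _⟩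
        rw [hempty, measure_empty] at this
        exact tendsto_of_tendsto_of_tendsto_of_le_of_le tendsto_const_nhds this
          (fun _ => zero_le) fun n => hfρ (s n))
      hg (.iUnion hg) hd
  refine ⟨ofMeasurable (fun s _ => f s) hf_empty hF, ?_, fun s hs => ?_⟩
  · exact le_iff.2 fun s hs => (ofMeasurable_apply s hs).trans_le (hfρ s)
  · rw [ofMeasurable_apply s hs]
    exact hf s

lemma sigmaFinite_of_measure_compl_iUnion {s : ℕ → Set X}
    (hs : ∀ n, μ (s n) < ∞) (h : μ (⋃ n, s n)ᶜ = 0) : SigmaFinite μ := by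
  refine sigmaFinite_of_countable (S := insert (⋃ n, s n)ᶜ (range s))
    ((countable_range s).insert _) ?_ (by rw [sUnion_insert, sUnion_range, compl_union_self])
  rintro _ (rfl | ⟨n, rfl⟩)
  exacts [h ▸ ENNReal.zero_lt_top, hs n]

lemma absolutelyContinuous_sum_of_restrict [Countable ι] (hY : μ (⋃ i, Y i)ᶜ = 0)
    (h : ∀ i, μ.restrict (Y i) ≪ ν i) : μ ≪ sum ν := by
  rw [← restrict_eq_self_of_ae_mem (mem_ae_iff.2 hY)]
  exact (absolutelyContinuous_of_le restrict_iUnion_le).trans <|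
    absolutelyContinuous_sum_left fun i => (h i).trans (absolutelyContinuous_of_le (le_sum ν i))

lemma sum_absolutelyContinuous_of_restrict (h : ∀ i, ν i ≪ μ.restrict (Y i)) : sum ν ≪ μ :=
  absolutelyContinuous_sum_left fun i =>
    (h i).trans (absolutelyContinuous_of_le restrict_le_self)

lemma ext_of_restrict_eq [Countable ι] {ρ₁ ρ₂ : Measure X} (hY : ∀ i, MeasurableSet (Y i))
    (hd : Pairwise (Disjoint on Y)) (h₁ : ρ₁ (⋃ i, Y i)ᶜ = 0) (h₂ : ρ₂ (⋃ i, Y i)ᶜ = 0)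
    (h : ∀ i, ρ₁.restrict (Y i) = ρ₂.restrict (Y i)) : ρ₁ = ρ₂ :=
  calc ρ₁ = ρ₁.restrict (⋃ i, Y i) := (restrict_eq_self_of_ae_mem (mem_ae_iff.2 h₁)).symm
    _ = ρ₂.restrict (⋃ i, Y i) := by simp only [restrict_iUnion hd hY, h]
    _ = ρ₂ := restrict_eq_self_of_ae_mem (mem_ae_iff.2 h₂)

lemma sum_apply_of_subset (hd : Pairwise (Disjoint on Y)) (hν : ∀ i, ν i ≪ μ.restrict (Y i))
    {j : ι} {S : Set X} (hS : MeasurableSet S) (hSj : S ⊆ Y j) : sum ν S = ν j S := by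
  rw [sum_apply _ hS]
  refine tsum_eq_single j fun i hij => hν i ?_
  rw [restrict_apply hS, disjoint_iff_inter_eq_empty.1 ((hd hij.symm).mono_left hSj),
    measure_empty]

lemma sum_le_of_tendsto {κ : Type*} {U : Filter κ} [U.NeBot] {ρ : κ → Measure X}
    (hY : ∀ i, MeasurableSet (Y i)) (hd : Pairwise (Disjoint on Y))
    (hlim : ∀ i A, MeasurableSet A → Tendsto (fun n => ρ n (A ∩ Y i)) U (𝓝 (ν i A)))
    {B : Set X} (hB : MeasurableSet B) {L : ℝ≥0∞} (hL : Tendsto (fun n => ρ n B) U (𝓝 L)) :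
    sum ν B ≤ L := by
  rw [sum_apply _ hB, ENNReal.tsum_eq_iSup_sum]
  refine iSup_le fun s => le_of_tendsto_of_tendsto
    (tendsto_finsetSum s fun i _ => hlim i B hB) hL (Eventually.of_forall fun n => ?_)
  dsimp only
  rw [← measure_biUnion_finset (fun i _ k _ hik => (hd hik).mono inter_subset_right
    inter_subset_right) fun i _ => hB.inter (hY i)]
  exact measure_mono (iUnion₂_subset fun i _ => inter_subset_left)

lemma sum_apply_lt_top_of_disjointed {Xs : ℕ → Set X}
    {ν : ℕ → Measure X} [∀ i, IsFiniteMeasure (ν i)]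
    (hν : ∀ i, ν i ≪ μ.restrict (disjointed Xs i)) {j : ℕ} (hj : MeasurableSet (Xs j)) :
    sum ν (Xs j) < ∞ := by
  rw [sum_apply _ hj, tsum_eq_sum (s := range (j + 1)) fun i hi => ?_]
  · exact ENNReal.sum_lt_top.2 fun i _ => measure_lt_top _ _
  refine hν i ?_
  rw [restrict_apply hj, disjoint_iff_inter_eq_empty.1, measure_empty]
  exact disjoint_sdiff_self_right.mono_left
    (Finset.le_sup (f := Xs) (Finset.mem_Iio.2 (by simpa using hi)))

end Measure

lemma measure_le_sum_inter_add_inter_tail {μ : Measure X} {Y : ℕ → Set X}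
    (hY : μ (⋃ i, Y i)ᶜ = 0) (A : Set X) (l : ℕ) :
    μ A ≤ ∑ i ∈ range l, μ (A ∩ Y i) + μ (A ∩ ⋃ i ∈ Ici l, Y i) := by
  have hsub : A ⊆ (⋃ i ∈ range l, A ∩ Y i) ∪ (A ∩ ⋃ i ∈ Ici l, Y i) ∪ (⋃ i, Y i)ᶜ := by
    intro x hx
    by_cases h : x ∈ ⋃ i, Y i
    · obtain ⟨i, hi⟩ := mem_iUnion.1 h
      rcases lt_or_ge i l with hil | hil
      · exact Or.inl (Or.inl (mem_biUnion (mem_range.2 hil) ⟨hx, hi⟩))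
      · exact Or.inl (Or.inr ⟨hx, mem_biUnion (mem_Ici.2 hil) hi⟩)
    · exact Or.inr h
  calc μ A ≤ μ (⋃ i ∈ range l, A ∩ Y i) + μ (A ∩ ⋃ i ∈ Ici l, Y i) + μ (⋃ i, Y i)ᶜ :=
        (measure_mono hsub).trans <|
          (measure_union_le _ _).trans (add_le_add_left (measure_union_le _ _) _)
    _ ≤ _ := by rw [hY, add_zero]; gcongr; exact measure_biUnion_finset_le _ _

noncomputable def orbitSum (m : Measure X) (T : X → X) (N : ℕ) : Measure X :=
  ∑ k ∈ range N, m.map T^[k]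

-- For measurable `A`, `normalizedOrbitSum m T (Xs 0) (n + 1) A` is the paper's `m_n(A)`, that is
-- `mseq m T Xs A n` computed in `ℝ≥0∞`.
noncomputable def normalizedOrbitSum (m : Measure X) (T : X → X) (E : Set X) (N : ℕ) :
    Measure X :=
  (orbitSum m T N E)⁻¹ • orbitSum m T N

section OrbitSum

variable {m : Measure X} {T : X → X}

lemma orbitSum_apply (hT : Measurable T) (N : ℕ) {A : Set X} (hA : MeasurableSet A) :
    orbitSum m T N A = ∑ k ∈ range N, m (T^[k] ⁻¹' A) := by
  simp [orbitSum, Measure.finsetSum_apply, Measure.map_apply (hT.iterate _) hA]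

lemma orbitSum_preimage_iterate (hT : Measurable T) (N r : ℕ) {A : Set X}
    (hA : MeasurableSet A) :
    orbitSum m T N (T^[r] ⁻¹' A) = ∑ k ∈ range N, m (T^[k + r] ⁻¹' A) := by
  simp [orbitSum_apply hT N ((hT.iterate r) hA), ← preimage_comp, ← Function.iterate_add, add_comm]

lemma normalizedOrbitSum_apply (E : Set X) (N : ℕ) (A : Set X) :
    normalizedOrbitSum m T E N A = (orbitSum m T N E)⁻¹ * orbitSum m T N A := rfl

lemma normalizedOrbitSum_absolutelyContinuous (hT : Measure.QuasiMeasurePreserving T m m)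
    (E : Set X) (N : ℕ) : normalizedOrbitSum m T E N ≪ m := by
  refine Measure.AbsolutelyContinuous.smul_left (.mk fun A hA hA0 => ?_) _
  rw [orbitSum_apply hT.measurable N hA]
  exact Finset.sum_eq_zero fun k _ => (hT.iterate k).preimage_null hA0

variable [IsProbabilityMeasure m]

lemma orbitSum_le (hT : Measurable T) (N : ℕ) {A : Set X} (hA : MeasurableSet A) :
    orbitSum m T N A ≤ N := by
  simpa [orbitSum_apply hT N hA] using
    Finset.sum_le_card_nsmul (range N) _ 1 fun k _ => prob_le_one

lemma orbitSum_preimage_iterate_le (hT : Measurable T) (N r : ℕ) {A : Set X}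
    (hA : MeasurableSet A) : orbitSum m T N (T^[r] ⁻¹' A) ≤ orbitSum m T N A + r := by
  rw [orbitSum_preimage_iterate hT N r hA, orbitSum_apply hT N hA]
  exact ENNReal.sum_range_shift_le _ (fun k => prob_le_one) N r

lemma orbitSum_le_preimage_iterate_add (hT : Measurable T) (N r : ℕ) {A : Set X}
    (hA : MeasurableSet A) : orbitSum m T N A ≤ orbitSum m T N (T^[r] ⁻¹' A) + r := by
  rw [orbitSum_preimage_iterate hT N r hA, orbitSum_apply hT N hA]
  exact ENNReal.le_sum_range_shift _ (fun k => prob_le_one) N r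

lemma normalizedOrbitSum_preimage_le (hT : Measurable T) (E : Set X) (N : ℕ) {A : Set X}
    (hA : MeasurableSet A) :
    normalizedOrbitSum m T E N (T ⁻¹' A) ≤
      normalizedOrbitSum m T E N A + (orbitSum m T N E)⁻¹ := by
  simp only [normalizedOrbitSum_apply]
  calc _ ≤ (orbitSum m T N E)⁻¹ * (orbitSum m T N A + 1) := by
        gcongr; simpa using orbitSum_preimage_iterate_le hT N 1 hA
    _ = _ := by rw [mul_add, mul_one]

lemma normalizedOrbitSum_le_preimage (hT : Measurable T) (E : Set X) (N : ℕ) {A : Set X}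
    (hA : MeasurableSet A) :
    normalizedOrbitSum m T E N A ≤
      normalizedOrbitSum m T E N (T ⁻¹' A) + (orbitSum m T N E)⁻¹ := by
  simp only [normalizedOrbitSum_apply]
  calc _ ≤ (orbitSum m T N E)⁻¹ * (orbitSum m T N (T ⁻¹' A) + 1) := by
        gcongr; simpa using orbitSum_le_preimage_iterate_add hT N 1 hA
    _ = _ := by rw [mul_add, mul_one]

end OrbitSum

end MeasureTheory

lemma MMY_eq_disjointed {X : Type*} (Xs : ℕ → Set X) : MMY Xs = disjointed Xs := by
  ext j x
  simp [MMY, disjointed_eq_inter_compl]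

namespace MarcoMartens

open MeasureTheory

variable {X : Type*} [MeasurableSpace X] {m : Measure X} {T : X → X} {Xs : ℕ → Set X}
  {K : ℕ → ℝ}

lemma quasiMeasurePreserving (hMM : MarcoMartens m T Xs K) :
    Measure.QuasiMeasurePreserving T m m :=
  ⟨hMM.measurable_T, hMM.quasi_invariant⟩

lemma measure_compl_iUnion_disjointed (hMM : MarcoMartens m T Xs K) :
    m (⋃ i, disjointed Xs i)ᶜ = 0 := by
  rw [iUnion_disjointed, compl_eq_univ_sdiff]
  exact hMM.cover

lemma measure_pos (hMM : MarcoMartens m T Xs K) (j : ℕ) : 0 < m (Xs j) := by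
  obtain ⟨k, hk⟩ := hMM.cond3 j j
  exact hk.trans_le (measure_mono inter_subset_left)

lemma orbitSum_mul_le (hMM : MarcoMartens m T Xs K) (j : ℕ) {A B : Set X}
    (hA : MeasurableSet A) (hB : MeasurableSet B) (hAj : A ⊆ Xs j) (hBj : B ⊆ Xs j) (N r : ℕ) :
    orbitSum m T N (T^[r] ⁻¹' A) * m B ≤
      ENNReal.ofReal (K j) * m A * orbitSum m T N (T^[r] ⁻¹' B) := by
  rw [orbitSum_preimage_iterate hMM.measurable_T N r hA,
    orbitSum_preimage_iterate hMM.measurable_T N r hB, Finset.sum_mul, Finset.mul_sum]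
  refine Finset.sum_le_sum fun k _ => ?_
  rw [mul_assoc]
  exact hMM.cond4 j A B hA hB hAj hBj (k + r)

lemma tendsto_orbitSum (hMM : MarcoMartens m T Xs K) :
    Tendsto (fun N => orbitSum m T N (Xs 0)) atTop (𝓝 ∞) := by
  simpa [orbitSum_apply hMM.measurable_T _ (hMM.meas_Xs 0), hMM.cond5] using
    ENNReal.tendsto_nat_tsum fun k => m (T^[k] ⁻¹' Xs 0)

lemma tendsto_inv_orbitSum (hMM : MarcoMartens m T Xs K) :
    Tendsto (fun N => (orbitSum m T N (Xs 0))⁻¹) atTop (𝓝 0) := by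
  simpa using tendsto_inv_iff.2 hMM.tendsto_orbitSum

variable [IsProbabilityMeasure m]

lemma exists_eventually_normalizedOrbitSum_le (hMM : MarcoMartens m T Xs K) (j : ℕ) :
    ∃ C : ℝ≥0, ∀ᶠ N in atTop, ∀ A, MeasurableSet A → A ⊆ Xs j →
      normalizedOrbitSum m T (Xs 0) N A ≤ C * m A := by
  have hT := hMM.measurable_T
  -- Compare `A` with `F ⊆ T^{-r} X₀` by (4); `m F > 0` by (3).
  obtain ⟨r, hr⟩ := hMM.cond3 j 0
  set F := Xs j ∩ T^[r] ⁻¹' Xs 0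
  have hF : MeasurableSet F := (hMM.meas_Xs j).inter (hT.iterate r (hMM.meas_Xs 0))
  set Kj := ENNReal.ofReal (K j)
  have hC : 2 * Kj / m F ≠ ∞ :=
    ENNReal.div_ne_top (ENNReal.mul_ne_top (by simp) ENNReal.ofReal_ne_top) hr.ne'
  refine ⟨(2 * Kj / m F).toNNReal, ?_⟩
  filter_upwards [ENNReal.tendsto_nhds_top_iff_nat.1 hMM.tendsto_orbitSum r] with N hN A hA hAj
  set D := orbitSum m T N (Xs 0)
  have hD0 : D ≠ 0 := (hN.trans_le' zero_le).ne'
  have hDtop : D ≠ ∞ := ne_top_of_le_ne_top (ENNReal.natCast_ne_top N)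
    (orbitSum_le hT N (hMM.meas_Xs 0))
  have key : orbitSum m T N A * m F ≤ 2 * Kj * m A * D :=
    calc orbitSum m T N A * m F ≤ Kj * m A * orbitSum m T N F := by
          simpa using hMM.orbitSum_mul_le j hA hF hAj inter_subset_left N 0
      _ ≤ Kj * m A * orbitSum m T N (T^[r] ⁻¹' Xs 0) := by gcongr; exact inter_subset_right
      _ ≤ Kj * m A * (D + D) := by
          gcongr
          exact (orbitSum_preimage_iterate_le hT N r (hMM.meas_Xs 0)).trans (by gcongr)
      _ = 2 * Kj * m A * D := by ring
  rw [ENNReal.coe_toNNReal hC, normalizedOrbitSum_apply, ← ENNReal.mul_div_right_comm,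
    ENNReal.le_div_iff_mul_le (Or.inl hr.ne') (Or.inl (measure_ne_top m F))]
  calc D⁻¹ * orbitSum m T N A * m F ≤ D⁻¹ * (2 * Kj * m A * D) := by
        rw [mul_assoc]; gcongr
    _ = 2 * Kj * m A := by rw [mul_comm, mul_assoc, ENNReal.mul_inv_cancel hD0 hDtop, mul_one]
  

lemma exists_eventually_le_normalizedOrbitSum_add (hMM : MarcoMartens m T Xs K) (j : ℕ) :
    ∃ c : ℝ≥0∞, c ≠ 0 ∧ ∃ r : ℕ, ∀ᶠ N in atTop, ∀ A, MeasurableSet A → A ⊆ Xs j →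
      c * m A ≤ normalizedOrbitSum m T (Xs 0) N A + r * (orbitSum m T N (Xs 0))⁻¹ := by
  have hT := hMM.measurable_T
  -- Compare `X₀` with `G ⊆ T^{-r} X_j`, then `X_j` with `A`, by (4); `m G > 0` by (3).
  obtain ⟨r, hr⟩ := hMM.cond3 0 j
  set G := Xs 0 ∩ T^[r] ⁻¹' Xs j
  have hG : MeasurableSet G := (hMM.meas_Xs 0).inter (hT.iterate r (hMM.meas_Xs j))
  set K₀ := ENNReal.ofReal (K 0)
  set Kj := ENNReal.ofReal (K j)
  have hK0 : K₀ * Kj ≠ 0 := mul_ne_zero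
    (ENNReal.ofReal_pos.2 (one_pos.trans_le (hMM.one_le_K 0))).ne'
    (ENNReal.ofReal_pos.2 (one_pos.trans_le (hMM.one_le_K j))).ne'
  have hKtop : K₀ * Kj ≠ ∞ := ENNReal.mul_ne_top ENNReal.ofReal_ne_top ENNReal.ofReal_ne_top
  refine ⟨m G / (K₀ * Kj), (ENNReal.div_pos hr.ne' hKtop).ne', r, ?_⟩
  filter_upwards [ENNReal.tendsto_nhds_top_iff_nat.1 hMM.tendsto_orbitSum 0] with N hN A hA hAj
  set D := orbitSum m T N (Xs 0)
  have hD0 : D ≠ 0 := by simpa using hN.ne'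
  have hDtop : D ≠ ∞ := ne_top_of_le_ne_top (ENNReal.natCast_ne_top N)
    (orbitSum_le hT N (hMM.meas_Xs 0))
  have key : D * m G * m A ≤ K₀ * Kj * (orbitSum m T N A + r) :=
    calc D * m G * m A ≤ K₀ * m (Xs 0) * orbitSum m T N G * m A := by
          gcongr ?_ * _
          simpa using hMM.orbitSum_mul_le 0 (hMM.meas_Xs 0) hG subset_rfl inter_subset_left N 0
      _ ≤ K₀ * 1 * orbitSum m T N (T^[r] ⁻¹' Xs j) * m A := by
          gcongr
          exacts [prob_le_one, inter_subset_right]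
      _ = K₀ * (orbitSum m T N (T^[r] ⁻¹' Xs j) * m A) := by ring
      _ ≤ K₀ * (Kj * m (Xs j) * orbitSum m T N (T^[r] ⁻¹' A)) := by
          gcongr K₀ * ?_
          exact hMM.orbitSum_mul_le j (hMM.meas_Xs j) hA subset_rfl hAj N r
      _ ≤ K₀ * (Kj * 1 * (orbitSum m T N A + r)) := by
          gcongr
          exacts [prob_le_one, orbitSum_preimage_iterate_le hT N r hA]
      _ = K₀ * Kj * (orbitSum m T N A + r) := by ring
  rw [normalizedOrbitSum_apply, mul_comm (r : ℝ≥0∞), ← mul_add, ← ENNReal.mul_div_right_comm,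
    ENNReal.div_le_iff hK0 hKtop]
  calc m G * m A = D⁻¹ * (D * m G * m A) := by
        rw [← mul_assoc, ← mul_assoc, ENNReal.inv_mul_cancel hD0 hDtop, one_mul]
    _ ≤ D⁻¹ * (K₀ * Kj * (orbitSum m T N A + r)) := by gcongr
    _ = D⁻¹ * (orbitSum m T N A + r) * (K₀ * Kj) := by ring

lemma tendsto_normalizedOrbitSum_preimage (hMM : MarcoMartens m T Xs K) (U : Ultrafilter ℕ)
    (hU : (U : Filter ℕ) ≤ atTop) {A : Set X} (hA : MeasurableSet A) {L : ℝ≥0∞}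
    (h : Tendsto (fun N => normalizedOrbitSum m T (Xs 0) N A) U (𝓝 L)) :
    Tendsto (fun N => normalizedOrbitSum m T (Xs 0) N (T ⁻¹' A)) U (𝓝 L) := by
  have hT := hMM.measurable_T
  have hinv := hMM.tendsto_inv_orbitSum.mono_left hU
  set L' := (U.map fun N => normalizedOrbitSum m T (Xs 0) N (T ⁻¹' A)).lim
  have h' : Tendsto (fun N => normalizedOrbitSum m T (Xs 0) N (T ⁻¹' A)) U (𝓝 L') :=
    (U.map _).le_nhds_lim
  suffices hL : L' = L by rwa [hL] at h'
  refine le_antisymm ?_ ?_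
  · exact le_of_tendsto_of_tendsto h' (by simpa using h.add hinv)
      (.of_forall fun N => normalizedOrbitSum_preimage_le hT _ N hA)
  · exact le_of_tendsto_of_tendsto h (by simpa using h'.add hinv)
      (.of_forall fun N => normalizedOrbitSum_le_preimage hT _ N hA)

theorem exists_measure_tendsto_restrict (hMM : MarcoMartens m T Xs K) (U : Ultrafilter ℕ)
    (hU : (U : Filter ℕ) ≤ atTop) {j : ℕ} {Y : Set X} (hY : MeasurableSet Y) (hYj : Y ⊆ Xs j) :
    ∃ μY : Measure X, IsFiniteMeasure μY ∧ μY ≪ m.restrict Y ∧ m.restrict Y ≪ μY ∧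
      ∀ A, MeasurableSet A →
        Tendsto (fun N => normalizedOrbitSum m T (Xs 0) N (A ∩ Y)) U (𝓝 (μY A)) := by
  obtain ⟨C, hC⟩ := hMM.exists_eventually_normalizedOrbitSum_le j
  obtain ⟨c, hc0, r, hc⟩ := hMM.exists_eventually_le_normalizedOrbitSum_add j
  have hsub : ∀ A, MeasurableSet A → A ∩ Y ⊆ Xs j := fun A _ => inter_subset_right.trans hYj
  have hle : ∀ᶠ N in (U : Filter ℕ),
      (normalizedOrbitSum m T (Xs 0) N).restrict Y ≤ C • m.restrict Y := by
    refine hU (hC.mono fun N hN => Measure.le_iff.2 fun A hA => ?_)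
    simpa [Measure.restrict_apply hA] using hN _ (hA.inter hY) (hsub A hA)
  obtain ⟨μY, hμY, hlim⟩ := Measure.exists_tendsto_of_eventually_le U _ hle
  have hlim' : ∀ A, MeasurableSet A →
      Tendsto (fun N => normalizedOrbitSum m T (Xs 0) N (A ∩ Y)) U (𝓝 (μY A)) := fun A hA => by
    simpa [Measure.restrict_apply hA] using hlim A hA
  refine ⟨μY, isFiniteMeasure_of_le _ hμY,
    (Measure.absolutelyContinuous_of_le hμY).trans Measure.smul_absolutelyContinuous, ?_, hlim'⟩
  refine Measure.AbsolutelyContinuous.mk fun A hA hA0 => ?_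
  have hinv := hMM.tendsto_inv_orbitSum.mono_left hU
  have hbound : c * m (A ∩ Y) ≤ μY A :=
    le_of_tendsto_of_tendsto tendsto_const_nhds
      (by simpa using (hlim' A hA).add (ENNReal.Tendsto.const_mul hinv
        (Or.inr (ENNReal.natCast_ne_top r))))
      ((hc.filter_mono hU).mono fun N hN => hN _ (hA.inter hY) (hsub A hA))
  rw [Measure.restrict_apply hA]
  simpa [hA0, hc0] using hbound


lemma exists_eventually_normalizedOrbitSum_preimage_inter_le (hMM : MarcoMartens m T Xs K)
    (j : ℕ) : ∃ C : ℝ≥0, ∀ᶠ N in atTop, ∀ S, MeasurableSet S → S ⊆ Xs j → ∀ B, MeasurableSet B →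
      normalizedOrbitSum m T (Xs 0) N (T ⁻¹' S ∩ B) ≤
        C * m (T '' B) + (orbitSum m T N (Xs 0))⁻¹ := by
  obtain ⟨C, hC⟩ := hMM.exists_eventually_normalizedOrbitSum_le j
  refine ⟨C, hC.mono fun N hN S hS hSj B hB => ?_⟩
  have hTB := hMM.image_meas B hB
  calc normalizedOrbitSum m T (Xs 0) N (T ⁻¹' S ∩ B)
      ≤ normalizedOrbitSum m T (Xs 0) N (T ⁻¹' (S ∩ T '' B)) :=
        measure_mono fun x hx => ⟨hx.1, mem_image_of_mem T hx.2⟩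
    _ ≤ normalizedOrbitSum m T (Xs 0) N (S ∩ T '' B) + (orbitSum m T N (Xs 0))⁻¹ :=
        normalizedOrbitSum_preimage_le hMM.measurable_T _ N (hS.inter hTB)
    _ ≤ C * m (T '' B) + (orbitSum m T N (Xs 0))⁻¹ := by
        gcongr
        exact (hN _ (hS.inter hTB) (inter_subset_left.trans hSj)).trans
          (by gcongr; exact inter_subset_right)

theorem measure_sum_preimage (hMM : MarcoMartens m T Xs K) {μi : ℕ → Measure X}
    (hac : ∀ i, μi i ≪ m.restrict (disjointed Xs i)) (U : Ultrafilter ℕ)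
    (hU : (U : Filter ℕ) ≤ atTop)
    (hlim : ∀ i A, MeasurableSet A →
      Tendsto (fun N => normalizedOrbitSum m T (Xs 0) N (A ∩ disjointed Xs i)) U (𝓝 (μi i A)))
    {j : ℕ} {S : Set X} (hS : MeasurableSet S) (hSj : S ⊆ disjointed Xs j) :
    Measure.sum μi (T ⁻¹' S) = Measure.sum μi S := by
  set ν := normalizedOrbitSum m T (Xs 0)
  have hT := hMM.measurable_T
  have hY := MeasurableSet.disjointed hMM.meas_Xs
  have hd := disjoint_disjointed Xs
  have hS_lim : Tendsto (fun N => ν N S) U (𝓝 (Measure.sum μi S)) := by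
    rw [Measure.sum_apply_of_subset hd hac hS hSj]
    simpa [inter_eq_left.2 hSj] using hlim j S hS
  have hTS_lim := hMM.tendsto_normalizedOrbitSum_preimage U hU hS hS_lim
  refine le_antisymm (Measure.sum_le_of_tendsto hY hd hlim (hT hS) hTS_lim) ?_
  -- By (6), the part of `T⁻¹S` in the tail `B l` carries at most `C m(T(B l)) → 0` in the limit.
  obtain ⟨C, hC⟩ := hMM.exists_eventually_normalizedOrbitSum_preimage_inter_le j
  set B : ℕ → Set X := fun l => ⋃ i ∈ Ici l, disjointed Xs i
  have hB : ∀ l, MeasurableSet (B l) := fun l => .biUnion (to_countable _) fun i _ => hY i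
  have hl : ∀ l, Measure.sum μi S ≤ Measure.sum μi (T ⁻¹' S) + C * m (T '' B l) := fun l => by
    have hbound : ∀ᶠ N in (U : Filter ℕ), ν N (T ⁻¹' S) ≤
        ∑ i ∈ range l, ν N (T ⁻¹' S ∩ disjointed Xs i) +
          (C * m (T '' B l) + (orbitSum m T N (Xs 0))⁻¹) := by
      refine (hC.filter_mono hU).mono fun N hN => ?_
      have hnull : ν N (⋃ i, disjointed Xs i)ᶜ = 0 :=
        normalizedOrbitSum_absolutelyContinuous hMM.quasiMeasurePreserving _ N
          hMM.measure_compl_iUnion_disjointed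
      have htail := hN S hS (hSj.trans (disjointed_subset Xs j)) (B l) (hB l)
      exact (measure_le_sum_inter_add_inter_tail hnull _ l).trans (by gcongr)
    calc Measure.sum μi S ≤ ∑ i ∈ range l, μi i (T ⁻¹' S) + (C * m (T '' B l) + 0) :=
          le_of_tendsto_of_tendsto hTS_lim ((tendsto_finsetSum _ fun i _ => hlim i _ (hT hS)).add
            (tendsto_const_nhds.add (hMM.tendsto_inv_orbitSum.mono_left hU))) hbound
      _ ≤ Measure.sum μi (T ⁻¹' S) + C * m (T '' B l) := by
          rw [add_zero, Measure.sum_apply _ (hT hS)]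
          gcongr
          exact ENNReal.sum_le_tsum _
  have h6 : Tendsto (fun l => m (T '' B l)) atTop (𝓝 0) := by
    simpa [B, MMY_eq_disjointed] using hMM.cond6
  have hlim_l : Tendsto (fun l => Measure.sum μi (T ⁻¹' S) + C * m (T '' B l)) atTop
      (𝓝 (Measure.sum μi (T ⁻¹' S))) := by
    simpa using tendsto_const_nhds.add (ENNReal.Tendsto.const_mul h6 (Or.inr ENNReal.coe_ne_top))
  exact ge_of_tendsto hlim_l (Eventually.of_forall hl)

theorem map_measure_sum_eq (hMM : MarcoMartens m T Xs K) {μi : ℕ → Measure X}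
    (hac : ∀ i, μi i ≪ m.restrict (disjointed Xs i)) (U : Ultrafilter ℕ)
    (hU : (U : Filter ℕ) ≤ atTop)
    (hlim : ∀ i A, MeasurableSet A →
      Tendsto (fun N => normalizedOrbitSum m T (Xs 0) N (A ∩ disjointed Xs i)) U (𝓝 (μi i A))) :
    (Measure.sum μi).map T = Measure.sum μi := by
  have hT := hMM.measurable_T
  have hY := MeasurableSet.disjointed hMM.meas_Xs
  have hμm := Measure.sum_absolutelyContinuous_of_restrict hac
  have hnull := hMM.measure_compl_iUnion_disjointed
  refine Measure.ext_of_restrict_eq hY (disjoint_disjointed Xs) ?_ (hμm hnull)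
    fun j => Measure.ext fun A hA => ?_
  · rw [Measure.map_apply hT (MeasurableSet.iUnion hY).compl]
    exact hμm (hMM.quasiMeasurePreserving.preimage_null hnull)
  · rw [Measure.restrict_apply hA, Measure.restrict_apply hA,
      Measure.map_apply hT (hA.inter (hY j))]
    exact hMM.measure_sum_preimage hac U hU hlim (hA.inter (hY j)) inter_subset_right

end MarcoMartens

/-- For a Marco–Martens map `T` on the probability space `(X, ℬ, m)` with Marco–Martens cover
`(X_j)`, there exists a σ-finite `T`-invariant measure `μ` equivalent to `m` with
`0 < μ(X_j) < ∞` for every `j ≥ 0`. -/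
theorem stmt14 {X : Type*} [MeasurableSpace X] (m : Measure X) [IsProbabilityMeasure m]
    (T : X → X) (Xs : ℕ → Set X) (K : ℕ → ℝ) (hMM : MarcoMartens m T Xs K) :
    ∃ μ : Measure X, SigmaFinite μ ∧
      (∀ A : Set X, MeasurableSet A → μ (T ⁻¹' A) = μ A) ∧
      μ ≪ m ∧ m ≪ μ ∧
      ∀ j : ℕ, 0 < μ (Xs j) ∧ μ (Xs j) < ⊤ := by
  set U := Ultrafilter.of (atTop : Filter ℕ)
  have hU : (U : Filter ℕ) ≤ atTop := Ultrafilter.of_le atTop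
  choose μi hfin hac hac' hlim using fun i => hMM.exists_measure_tendsto_restrict U hU
    (MeasurableSet.disjointed hMM.meas_Xs i) (disjointed_subset Xs i)
  have hμm : Measure.sum μi ≪ m := Measure.sum_absolutelyContinuous_of_restrict hac
  have hmμ : m ≪ Measure.sum μi :=
    Measure.absolutelyContinuous_sum_of_restrict hMM.measure_compl_iUnion_disjointed hac'
  have hfinite : ∀ j, Measure.sum μi (Xs j) < ∞ := fun j =>
    Measure.sum_apply_lt_top_of_disjointed hac (hMM.meas_Xs j)
  refine ⟨Measure.sum μi, Measure.sigmaFinite_of_measure_compl_iUnion hfinite ?_,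
    fun A hA => ?_, hμm, hmμ, fun j => ⟨?_, hfinite j⟩⟩
  · exact hμm (by simpa [iUnion_disjointed] using hMM.measure_compl_iUnion_disjointed)
  · rw [← Measure.map_apply hMM.measurable_T hA, hMM.map_measure_sum_eq hac U hU hlim]
  · exact pos_iff_ne_zero.2 fun h => (hMM.measure_pos j).ne' (hmμ h)
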